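/- arXiv:0801.2006 — 8 statements merged into one kernel-verified Lean document; each statement's English description precedes it below -/
import Mathlib

section
/- Let M be a metric space, let X, Y ⊆ M, and let E₁ ⊆ X and E₂ ⊆ Y be nonempty subsets with Metric.hausdorffEdist E₁ E₂ < ∞; write D = d_H(E₁, E₂). Let K ≥ 1 and C ≥ 0, and assume that for every x ∈ X and y ∈ Y one has dist(x, E₁) + D + dist(y, E₂) ≤ K · dist(x, y) + C. Then: (i) every point e ∈ E₁ ∪ E₂ satisfies dist(e, X) ≤ D and dist(e, Y) ≤ D; and (ii) for every r ≥ 0 and every q ∈ M with dist(q, X) ≤ r and dist(q, Y) ≤ r, one has dist(q, E₁) ≤ (2K + 1) · r + C − D and dist(q, E₂) ≤ (2K + 1) · r + C − D. (Lemma 3.2 of the paper: junctures represent coarse intersections.) -/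
/-!
(i) A point of `E₁` lies in `X` and is within `d_H(E₁, E₂)` of `E₂ ⊆ Y`; symmetrically for `E₂`.

(ii) For `x ∈ X` and `y ∈ Y`, the juncture inequality together with
`dist(x, y) ≤ dist(q, x) + dist(q, y)` gives
`dist(q, E₁) ≤ (K + 1) · dist(q, x) + K · dist(q, y) + C - D`.
Taking the infimum over `x` and `y` turns this into a bound by `dist(q, X), dist(q, Y) ≤ r`.
-/

open Metric

section

variable {M : Type*} [MetricSpace M]

lemma le_mul_infDist_add {s : Set M} {x : M} {a b c : ℝ} (hc : 0 ≤ c) (hs : s.Nonempty)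
    (h : ∀ y ∈ s, a ≤ c * dist x y + b) : a ≤ c * infDist x s + b := by
  rcases hc.eq_or_lt with rfl | hc
  · obtain ⟨y, hy⟩ := hs
    simpa using h y hy
  · have : (a - b) / c ≤ infDist x s :=
      (le_infDist hs).mpr fun y hy => (div_le_iff₀' hc).mpr (by linarith [h y hy])
    linarith [(div_le_iff₀' hc).mp this]

lemma infDist_le_hausdorffDist_of_mem_of_subset {s t u : Set M} {x : M} (hx : x ∈ s)
    (htu : t ⊆ u) (ht : t.Nonempty) (hfin : hausdorffEDist s t ≠ ⊤) :
    infDist x u ≤ hausdorffDist s t :=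
  (infDist_le_infDist_of_subset htu ht).trans (infDist_le_hausdorffDist_of_mem hx hfin)

lemma infDist_le_of_juncture_bound {X Y E₁ E₂ : Set M} {K C D : ℝ} (hK : 0 ≤ K)
    (hX : X.Nonempty) (hY : Y.Nonempty)
    (hyp : ∀ x ∈ X, ∀ y ∈ Y, infDist x E₁ + D + infDist y E₂ ≤ K * dist x y + C) (q : M) :
    infDist q E₁ ≤ (K + 1) * infDist q X + K * infDist q Y + C - D := by
  have pointwise : ∀ x ∈ X, ∀ y ∈ Y,
      infDist q E₁ ≤ K * dist q y + ((K + 1) * dist q x + C - D) := by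
    intro x hx y hy
    have hxy : K * dist x y ≤ K * (dist q x + dist q y) :=
      mul_le_mul_of_nonneg_left (dist_triangle_left x y q) hK
    linarith [hyp x hx y hy, infDist_le_infDist_add_dist (x := q) (y := x) (s := E₁),
      infDist_nonneg (x := y) (s := E₂), dist_comm q x]
  have inf_over_Y : ∀ x ∈ X,
      infDist q E₁ ≤ (K + 1) * dist q x + (K * infDist q Y + C - D) := fun x hx => by
    linarith [le_mul_infDist_add hK hY (pointwise x hx)]
  linarith [le_mul_infDist_add (by linarith) hX inf_over_Y]

end

theorem junctures_represent_coarse_intersection_general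
    {M : Type*} [MetricSpace M] (X Y E₁ E₂ : Set M)
    (hE₁X : E₁ ⊆ X) (hE₂Y : E₂ ⊆ Y)
    (hE₁ : E₁.Nonempty) (hE₂ : E₂.Nonempty)
    (hfin : EMetric.hausdorffEdist E₁ E₂ < ⊤)
    (K C : ℝ) (hK : 1 ≤ K)
    (hyp : ∀ x ∈ X, ∀ y ∈ Y,
      Metric.infDist x E₁ + Metric.hausdorffDist E₁ E₂ + Metric.infDist y E₂
        ≤ K * dist x y + C) :
    (∀ e ∈ E₁ ∪ E₂,
        Metric.infDist e X ≤ Metric.hausdorffDist E₁ E₂ ∧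
        Metric.infDist e Y ≤ Metric.hausdorffDist E₁ E₂) ∧
    (∀ r : ℝ, 0 ≤ r → ∀ q : M,
        Metric.infDist q X ≤ r → Metric.infDist q Y ≤ r →
        Metric.infDist q E₁ ≤ (2 * K + 1) * r + C - Metric.hausdorffDist E₁ E₂ ∧
        Metric.infDist q E₂ ≤ (2 * K + 1) * r + C - Metric.hausdorffDist E₁ E₂) := by
  have hfin' : hausdorffEDist E₂ E₁ ≠ ⊤ := by rw [hausdorffEDist_comm]; exact hfin.ne
  have hD : 0 ≤ hausdorffDist E₁ E₂ := hausdorffDist_nonneg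
  refine ⟨?_, fun r _ q hqX hqY => ?_⟩
  · rintro e (he | he)
    · exact ⟨(infDist_zero_of_mem (hE₁X he)).trans_le hD,
        infDist_le_hausdorffDist_of_mem_of_subset he hE₂Y hE₂ hfin.ne⟩
    · refine ⟨?_, (infDist_zero_of_mem (hE₂Y he)).trans_le hD⟩
      rw [hausdorffDist_comm]
      exact infDist_le_hausdorffDist_of_mem_of_subset he hE₁X hE₁ hfin'
  have hX : X.Nonempty := hE₁.mono hE₁X
  have hY : Y.Nonempty := hE₂.mono hE₂Y
  have hK₀ : 0 ≤ K := by linarith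
  have h₁ := infDist_le_of_juncture_bound hK₀ hX hY hyp q
  have h₂ := infDist_le_of_juncture_bound (E₁ := E₂) (E₂ := E₁) (C := C)
    (D := hausdorffDist E₁ E₂) hK₀ hY hX
    (fun y hy x hx => by rw [dist_comm]; linarith [hyp x hx y hy]) q
  have hrX := mul_le_mul_of_nonneg_left hqX hK₀
  have hrY := mul_le_mul_of_nonneg_left hqY hK₀
  constructor <;> linarith

/-- Lemma 3.2 of Behrstock–Kleiner–Minsky–Mosher: junctures represent coarse
intersections. -/
theorem junctures_represent_coarse_intersection
    {M : Type*} [MetricSpace M] (X Y E₁ E₂ : Set M)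
    (hE₁X : E₁ ⊆ X) (hE₂Y : E₂ ⊆ Y)
    (hE₁ : E₁.Nonempty) (hE₂ : E₂.Nonempty)
    (hfin : EMetric.hausdorffEdist E₁ E₂ < ⊤)
    (K C : ℝ) (hK : 1 ≤ K) (hC : 0 ≤ C)
    (hyp : ∀ x ∈ X, ∀ y ∈ Y,
      Metric.infDist x E₁ + Metric.hausdorffDist E₁ E₂ + Metric.infDist y E₂
        ≤ K * dist x y + C) :
    (∀ e ∈ E₁ ∪ E₂,
        Metric.infDist e X ≤ Metric.hausdorffDist E₁ E₂ ∧
        Metric.infDist e Y ≤ Metric.hausdorffDist E₁ E₂) ∧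
    (∀ r : ℝ, 0 ≤ r → ∀ q : M,
        Metric.infDist q X ≤ r → Metric.infDist q Y ≤ r →
        Metric.infDist q E₁ ≤ (2 * K + 1) * r + C - Metric.hausdorffDist E₁ E₂ ∧
        Metric.infDist q E₂ ≤ (2 * K + 1) * r + C - Metric.hausdorffDist E₁ E₂) :=
  junctures_represent_coarse_intersection_general X Y E₁ E₂ hE₁X hE₂Y hE₁ hE₂ hfin K C hK hyp
end

section
/- For every δ ≥ 0 and every N ∈ ℕ there exists Q ≥ 0, depending only on δ and N, with the following property: if X is a δ-hyperbolic geodesic metric space, A ⊆ X is a nonempty finite set with at most N elements, and H is a geodesic hull of A, then H is Q-quasiconvex. (Lemma 5.1(1) of the paper: hyperbolic hulls of finite sets are quasiconvex, with constants depending only on the hyperbolicity constant and the cardinality of A.) -/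
/-!
The constant is `6δ`, independent of the number of points. A point `m` of a geodesic `[p, q]`
with `p ∈ [a, b]` and `q ∈ [a', b']` (hull geodesics) is, by `3δ`-slimness of the triangle
`p, a', q`, close to the subsegment `[a', q]` of `[a', b']` or to some point `x` of an auxiliary
geodesic `[p, a']`. In the latter case slimness of the triangle `p, a, a'` puts `x` within `3δ`
of the subsegment `[p, a]` of `[a, b]` or of the hull geodesic `[a, a']`.
-/

/-- A metric space is `δ`-hyperbolic if it satisfies the four-point condition. -/
def DeltaHyperbolic (X : Type*) [MetricSpace X] (δ : ℝ) : Prop :=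
  ∀ w x y z : X,
    dist w x + dist y z ≤ max (dist w y + dist x z) (dist w z + dist x y) + 2 * δ

/-- `γ : ℝ → X` is a geodesic from `a` to `b`, parametrized by arclength on
`[0, dist a b]`. -/
def IsGeodesicFrom {X : Type*} [MetricSpace X] (γ : ℝ → X) (a b : X) : Prop :=
  γ 0 = a ∧ γ (dist a b) = b ∧
    ∀ s ∈ Set.Icc (0 : ℝ) (dist a b), ∀ t ∈ Set.Icc (0 : ℝ) (dist a b),
      dist (γ s) (γ t) = |s - t|

/-- A metric space is geodesic if every pair of points is joined by a geodesic. -/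
def GeodesicSpace (X : Type*) [MetricSpace X] : Prop :=
  ∀ a b : X, ∃ γ : ℝ → X, IsGeodesicFrom γ a b

/-- `H` is a geodesic hull of `A`: the union over pairs `(a, a') ∈ A × A` of the
image of a chosen geodesic from `a` to `a'`. -/
def IsGeodesicHull {X : Type*} [MetricSpace X] (A H : Set X) : Prop :=
  ∃ γ : X → X → ℝ → X,
    (∀ a ∈ A, ∀ a' ∈ A, IsGeodesicFrom (γ a a') a a') ∧
    H = ⋃ a ∈ A, ⋃ a' ∈ A, γ a a' '' Set.Icc 0 (dist a a')

/-- A subset `B` is `Q`-quasiconvex if every point on every geodesic joining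
two points of `B` lies within distance `Q` of `B`. -/
def IsQuasiconvexSet {X : Type*} [MetricSpace X] (Q : ℝ) (B : Set X) : Prop :=
  ∀ p ∈ B, ∀ q ∈ B, ∀ γ : ℝ → X, IsGeodesicFrom γ p q →
    ∀ t ∈ Set.Icc (0 : ℝ) (dist p q), Metric.infDist (γ t) B ≤ Q

open Set Metric

variable {X : Type*} [MetricSpace X]

namespace IsGeodesicFrom

variable {γ : ℝ → X} {a b : X} {s : ℝ}

lemma dist_left (h : IsGeodesicFrom γ a b) (hs : s ∈ Icc 0 (dist a b)) : dist (γ s) a = s := by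
  rw [← h.1, h.2.2 s hs 0 ⟨le_rfl, dist_nonneg⟩, sub_zero, abs_of_nonneg hs.1]

lemma dist_right (h : IsGeodesicFrom γ a b) (hs : s ∈ Icc 0 (dist a b)) :
    dist (γ s) b = dist a b - s := by
  conv_lhs => rw [← h.2.1]
  rw [h.2.2 s hs _ ⟨dist_nonneg, le_rfl⟩, abs_sub_comm, abs_of_nonneg (sub_nonneg.2 hs.2)]

lemma dist_add_dist (h : IsGeodesicFrom γ a b) (hs : s ∈ Icc 0 (dist a b)) :
    dist (γ s) a + dist (γ s) b = dist a b := by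
  rw [h.dist_left hs, h.dist_right hs]; ring

lemma exists_subsegment_from_start (h : IsGeodesicFrom γ a b) (hs : s ∈ Icc 0 (dist a b)) :
    ∃ ρ : ℝ → X, IsGeodesicFrom ρ a (γ s) ∧
      ρ '' Icc 0 (dist a (γ s)) ⊆ γ '' Icc 0 (dist a b) := by
  have hda : dist a (γ s) = s := by rw [dist_comm, h.dist_left hs]
  rw [hda]
  have hsub : Icc 0 s ⊆ Icc 0 (dist a b) := Icc_subset_Icc_right hs.2
  refine ⟨γ, ⟨h.1, by rw [hda], ?_⟩, image_mono hsub⟩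
  rw [hda]
  exact fun u hu v hv => h.2.2 u (hsub hu) v (hsub hv)

lemma exists_subsegment_to_start (h : IsGeodesicFrom γ a b) (hs : s ∈ Icc 0 (dist a b)) :
    ∃ ρ : ℝ → X, IsGeodesicFrom ρ (γ s) a ∧
      ρ '' Icc 0 (dist (γ s) a) ⊆ γ '' Icc 0 (dist a b) := by
  rw [h.dist_left hs]
  have hmaps : MapsTo (fun u => s - u) (Icc 0 s) (Icc 0 (dist a b)) :=
    fun u hu => ⟨by linarith [hu.2], by linarith [hu.1, hs.2]⟩
  refine ⟨fun u => γ (s - u), ⟨by simp, ?_, ?_⟩, ?_⟩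
  · simp only [h.dist_left hs, sub_self, h.1]
  · rw [h.dist_left hs]
    intro u hu v hv
    rw [h.2.2 _ (hmaps hu) _ (hmaps hv), abs_sub_comm]
    ring_nf
  · rintro _ ⟨u, hu, rfl⟩
    exact ⟨s - u, hmaps hu, rfl⟩

end IsGeodesicFrom

namespace DeltaHyperbolic

variable {δ : ℝ}

/-- The witness is the point of `σ` at distance `(m|b)_a` from `a`. -/
lemma exists_two_mul_dist_le (hX : DeltaHyperbolic X δ) {σ : ℝ → X} {a b : X}
    (hσ : IsGeodesicFrom σ a b) (m : X) :
    ∃ s ∈ Icc 0 (dist a b), 2 * dist m (σ s) ≤ dist m a + dist m b - dist a b + 4 * δ := by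
  set s := (dist m a + dist a b - dist m b) / 2 with hs_def
  have hmb := dist_triangle m a b
  have hma := dist_triangle_right m a b
  have hs : s ∈ Icc 0 (dist a b) := ⟨by linarith, by linarith⟩
  refine ⟨s, hs, ?_⟩
  have h := hX m (σ s) a b
  rw [hσ.dist_left hs, hσ.dist_right hs] at h
  rcases max_cases (dist m a + (dist a b - s)) (dist m b + s) with ⟨he, _⟩ | ⟨he, _⟩ <;>
    rw [he] at h <;> linarith [hs_def]

lemma thin_of_dist_add_dist_eq (hX : DeltaHyperbolic X δ) {m p q : X}
    (hm : dist m p + dist m q = dist p q) (c : X) :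
    dist m p + dist m c - dist p c ≤ 2 * δ ∨ dist m c + dist m q - dist c q ≤ 2 * δ := by
  have h := hX p q m c
  rw [dist_comm p m, dist_comm q m, dist_comm q c, dist_comm p c] at h
  rcases max_cases (dist m p + dist c q) (dist c p + dist m q) with ⟨he, _⟩ | ⟨he, _⟩ <;>
    rw [he] at h
  · right; linarith
  · left; rw [dist_comm p c]; linarith

lemma exists_dist_le_of_mem_triangle (hX : DeltaHyperbolic X δ) {m p q c : X}
    (hm : dist m p + dist m q = dist p q) {σ τ : ℝ → X}
    (hσ : IsGeodesicFrom σ p c) (hτ : IsGeodesicFrom τ c q) :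
    ∃ y ∈ σ '' Icc 0 (dist p c) ∪ τ '' Icc 0 (dist c q), dist m y ≤ 3 * δ := by
  rcases hX.thin_of_dist_add_dist_eq hm c with hthin | hthin
  · obtain ⟨s, hs, hd⟩ := hX.exists_two_mul_dist_le hσ m
    exact ⟨σ s, Or.inl ⟨s, hs, rfl⟩, by linarith⟩
  · obtain ⟨s, hs, hd⟩ := hX.exists_two_mul_dist_le hτ m
    exact ⟨τ s, Or.inr ⟨s, hs, rfl⟩, by linarith⟩

end DeltaHyperbolic

universe u

/-- Lemma 5.1(1): hyperbolic hulls of finite sets are quasiconvex, with constant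
depending only on δ and the cardinality bound. -/
theorem hyperbolic_hulls_quasiconvex :
    ∀ (δ : ℝ), 0 ≤ δ → ∀ N : ℕ, ∃ Q : ℝ, 0 ≤ Q ∧
      ∀ (X : Type u) [MetricSpace X], DeltaHyperbolic X δ → GeodesicSpace X →
        ∀ (A : Finset X), A.Nonempty → A.card ≤ N →
          ∀ H : Set X, IsGeodesicHull (↑A) H → IsQuasiconvexSet Q H := by
  intro δ hδ N
  refine ⟨6 * δ, by linarith, ?_⟩
  rintro X _ hX hgeo A - - H ⟨g, hg, hH⟩ p hp q hq γ hγ t ht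
  have hull : ∀ x ∈ A, ∀ y ∈ A, g x y '' Icc 0 (dist x y) ⊆ H := fun x hx y hy =>
    hH ▸ subset_iUnion₂_of_subset x hx (subset_iUnion₂_of_subset y hy subset_rfl)
  simp only [hH, mem_iUnion, mem_image, Finset.mem_coe] at hp hq
  obtain ⟨a, ha, b, hb, u₀, hu₀, rfl⟩ := hp
  obtain ⟨a', ha', b', hb', u₁, hu₁, rfl⟩ := hq
  obtain ⟨ρ, hρ, hρH⟩ := (hg a ha b hb).exists_subsegment_to_start hu₀
  obtain ⟨τ, hτ, hτH⟩ := (hg a' ha' b' hb').exists_subsegment_from_start hu₁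
  obtain ⟨σ, hσ⟩ := hgeo (g a b u₀) a'
  obtain ⟨y, hy, hmy⟩ := hX.exists_dist_le_of_mem_triangle (hγ.dist_add_dist ht) hσ hτ
  rcases hy with ⟨s, hs, rfl⟩ | hy
  · obtain ⟨z, hz, hyz⟩ :=
      hX.exists_dist_le_of_mem_triangle (hσ.dist_add_dist hs) hρ (hg a ha a' ha')
    have hzH : z ∈ H := hz.elim (fun hz => hull a ha b hb (hρH hz)) (hull a ha a' ha' ·)
    calc infDist (γ t) H ≤ dist (γ t) z := infDist_le_dist_of_mem hzH
      _ ≤ dist (γ t) (σ s) + dist (σ s) z := dist_triangle _ _ _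
      _ ≤ 6 * δ := by linarith
  · exact (infDist_le_dist_of_mem (hull a' ha' b' hb' (hτH hy))).trans (by linarith)
end

section
/- For every δ ≥ 0 and every N ∈ ℕ there exist K ≥ 1 and C ≥ 0, depending only on δ and N, with the following property: if X is a δ-hyperbolic geodesic metric space, A ⊆ X is a nonempty finite set with at most N elements, H is a geodesic hull of A, x ∈ X, and y ∈ H satisfies dist x y = Metric.infDist x H (i.e., y is a nearest point of H to x), then for every y' ∈ H one has dist y y' ≤ K · (dist x y' − dist x y) + C. (Lemma 5.1(2) of the paper.) -/
/-!
A geodesic hull `H` of a finite set in a `δ`-hyperbolic space is `8δ`-quasiconvex: a geodesic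
between two points of `H` is covered by two `4δ`-slim triangles whose remaining sides lie in `H`.
Now let `y` be a nearest point of a `Q`-quasiconvex set to `x`, and `y'` another point of it. The
point `m` at distance about `Q + 2δ` from `y` on a geodesic `[y, y']` is `Q`-close to the set, so
`d(x, m) ≥ d(x, y) - Q`. The four-point condition for `x, m, y, y'` then rules out that `m` is
`2δ`-closer to `x` than `y` is, and otherwise yields `d(y, y') ≤ d(x, y') - d(x, y) + 2Q + 4δ`.
Hence one may take `K = 1` and `C = 20δ`, independently of `N`.
-/

open Metric Set

variable {X : Type*} [MetricSpace X]

section Geodesic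

variable {γ : ℝ → X} {a b : X} {s : ℝ}

theorem IsGeodesicFrom.dist_left_apply (h : IsGeodesicFrom γ a b) (hs : s ∈ Icc 0 (dist a b)) :
    dist a (γ s) = s := by
  have := h.2.2 0 ⟨le_rfl, dist_nonneg⟩ s hs
  rwa [h.1, zero_sub, abs_neg, abs_of_nonneg hs.1] at this

theorem IsGeodesicFrom.dist_apply_right (h : IsGeodesicFrom γ a b) (hs : s ∈ Icc 0 (dist a b)) :
    dist (γ s) b = dist a b - s := by
  have := h.2.2 s hs _ ⟨dist_nonneg, le_rfl⟩
  rwa [h.2.1, abs_of_nonpos (by linarith [hs.2]), neg_sub] at this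

theorem IsGeodesicFrom.dist_add_dist_apply (h : IsGeodesicFrom γ a b)
    (hs : s ∈ Icc 0 (dist a b)) : dist a (γ s) + dist (γ s) b = dist a b := by
  rw [h.dist_left_apply hs, h.dist_apply_right hs]
  ring

theorem IsGeodesicFrom.suffix (h : IsGeodesicFrom γ a b) (hs : s ∈ Icc 0 (dist a b)) :
    IsGeodesicFrom (fun u => γ (s + u)) (γ s) b := by
  have hdist := h.dist_apply_right hs
  refine ⟨by simp, by simp [hdist, h.2.1], fun u hu v hv => ?_⟩
  rw [hdist] at hu hv
  rw [h.2.2 (s + u) ⟨by linarith [hs.1, hu.1], by linarith [hu.2]⟩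
    (s + v) ⟨by linarith [hs.1, hv.1], by linarith [hv.2]⟩, add_sub_add_left_eq_sub]

theorem IsGeodesicFrom.image_suffix_subset (h : IsGeodesicFrom γ a b)
    (hs : s ∈ Icc 0 (dist a b)) :
    (fun u => γ (s + u)) '' Icc 0 (dist (γ s) b) ⊆ γ '' Icc 0 (dist a b) := by
  rintro _ ⟨u, hu, rfl⟩
  rw [h.dist_apply_right hs] at hu
  exact ⟨s + u, ⟨by linarith [hs.1, hu.1], by linarith [hu.2]⟩, rfl⟩

end Geodesic

namespace DeltaHyperbolic

variable {δ : ℝ} (hX : DeltaHyperbolic X δ)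
include hX

theorem nonneg (x : X) : 0 ≤ δ := by
  have := hX x x x x
  simp only [dist_self, add_zero, max_self, zero_add] at this
  linarith

theorem dist_le_max_sub {p a b : X} (hp : dist a p + dist p b = dist a b) (w : X) :
    dist w p ≤ max (dist w a - dist a p) (dist w b - dist p b) + 2 * δ := by
  have h4 := hX w p a b
  have hmax : max (dist w a + dist p b) (dist w b + dist p a) =
      max (dist w a - dist a p) (dist w b - dist p b) + dist a b := by
    rw [← max_add_add_right, ← hp, dist_comm p a]
    congr 1 <;> ring
  linarith

theorem dist_le_of_dist_eq {x y z p q : X} (hp : dist x p + dist p y = dist x y)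
    (hq : dist x q + dist q z = dist x z) (hpq : dist x p = dist x q)
    (hgromov : 2 * dist x p ≤ dist x y + dist x z - dist y z) : dist p q ≤ 4 * δ := by
  have hδ := hX.nonneg x
  have hzp : dist z p ≤ dist x z - dist x p + 2 * δ := by
    have := hX.dist_le_max_sub hp z
    have : max (dist z x - dist x p) (dist z y - dist p y) ≤ dist x z - dist x p :=
      max_le (by rw [dist_comm]) (by rw [dist_comm z y]; linarith)
    linarith
  have := hX.dist_le_max_sub hq p
  have : max (dist p x - dist x q) (dist p z - dist q z) ≤ 2 * δ :=
    max_le (by rw [dist_comm, hpq]; linarith) (by rw [dist_comm]; linarith)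
  linarith

theorem exists_mem_union_dist_le {x y z : X} {γ₁ γ₂ γ₃ : ℝ → X}
    (h₁ : IsGeodesicFrom γ₁ x y) (h₂ : IsGeodesicFrom γ₂ x z) (h₃ : IsGeodesicFrom γ₃ y z)
    {s : ℝ} (hs : s ∈ Icc 0 (dist x y)) :
    ∃ p ∈ γ₂ '' Icc 0 (dist x z) ∪ γ₃ '' Icc 0 (dist y z), dist (γ₁ s) p ≤ 4 * δ := by
  have htri := dist_triangle_right x y z
  rcases le_total (2 * s) (dist x y + dist x z - dist y z) with hle | hge
  · have hs₂ : s ∈ Icc 0 (dist x z) := ⟨hs.1, by linarith⟩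
    refine ⟨γ₂ s, .inl ⟨s, hs₂, rfl⟩, hX.dist_le_of_dist_eq (h₁.dist_add_dist_apply hs)
      (h₂.dist_add_dist_apply hs₂) ?_ ?_⟩
    · rw [h₁.dist_left_apply hs, h₂.dist_left_apply hs₂]
    · rwa [h₁.dist_left_apply hs]
  · have hs₃ : dist x y - s ∈ Icc 0 (dist y z) := ⟨by linarith [hs.2], by linarith⟩
    refine ⟨γ₃ (dist x y - s), .inr ⟨_, hs₃, rfl⟩,
      hX.dist_le_of_dist_eq (x := y) (y := x) ?_ (h₃.dist_add_dist_apply hs₃) ?_ ?_⟩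
    · rw [dist_comm y, dist_comm _ x, dist_comm y x, add_comm]
      exact h₁.dist_add_dist_apply hs
    · rw [dist_comm, h₁.dist_apply_right hs, h₃.dist_left_apply hs₃]
    · rw [dist_comm, h₁.dist_apply_right hs, dist_comm y x]
      linarith

theorem dist_le_of_dist_le_add {x y y' m : X} (hm : dist y m + dist m y' = dist y y') {r : ℝ}
    (hr : r + 2 * δ < dist y m) (hxm : dist x y ≤ dist x m + r) :
    dist y y' ≤ dist x y' - dist x y + dist y m + r + 2 * δ := by
  have := hX.dist_le_max_sub hm x
  rcases max_cases (dist x y - dist y m) (dist x y' - dist m y') with ⟨h, _⟩ | ⟨h, _⟩ <;>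
    linarith

end DeltaHyperbolic

theorem IsQuasiconvexSet.dist_le_of_infDist_eq {δ Q : ℝ} {B : Set X} (hB : IsQuasiconvexSet Q B)
    (hX : DeltaHyperbolic X δ) (hgeo : GeodesicSpace X) {x y y' : X} (hy : y ∈ B)
    (hxy : dist x y = infDist x B) (hy' : y' ∈ B) :
    dist y y' ≤ dist x y' - dist x y + (2 * Q + 4 * δ) := by
  have hδ := hX.nonneg x
  obtain ⟨γ, hγ⟩ := hgeo y y'
  have hQ : 0 ≤ Q := infDist_nonneg.trans (hB y hy y' hy' γ hγ 0 ⟨le_rfl, dist_nonneg⟩)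
  have hgap : dist x y ≤ dist x y' := hxy ▸ infDist_le_dist_of_mem hy'
  refine le_of_forall_pos_lt_add fun ε hε => ?_
  by_cases hD : dist y y' ≤ Q + 2 * δ + ε / 2
  · linarith
  have ht : Q + 2 * δ + ε / 2 ∈ Icc 0 (dist y y') := ⟨by positivity, (not_le.1 hD).le⟩
  obtain ⟨m, hmB, hm⟩ := (infDist_lt_iff ⟨y, hy⟩).1
    ((hB y hy y' hy' γ hγ _ ht).trans_lt (lt_add_of_pos_right Q (by positivity : 0 < ε / 4)))
  have hxm : dist x y ≤ dist x (γ (Q + 2 * δ + ε / 2)) + (Q + ε / 4) :=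
    calc dist x y ≤ dist x m := hxy ▸ infDist_le_dist_of_mem hmB
      _ ≤ dist x (γ (Q + 2 * δ + ε / 2)) + dist (γ (Q + 2 * δ + ε / 2)) m := dist_triangle _ _ _
      _ ≤ _ := by linarith
  have := hX.dist_le_of_dist_le_add (hγ.dist_add_dist_apply ht)
    (by rw [hγ.dist_left_apply ht]; linarith) hxm
  rw [hγ.dist_left_apply ht] at this
  linarith

namespace IsGeodesicHull

variable {A H : Set X} (hH : IsGeodesicHull A H)
include hH

theorem exists_isGeodesicFrom_subset {a a' : X} (ha : a ∈ A) (ha' : a' ∈ A) :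
    ∃ γ, IsGeodesicFrom γ a a' ∧ γ '' Icc 0 (dist a a') ⊆ H := by
  obtain ⟨Γ, hΓ, rfl⟩ := hH
  exact ⟨Γ a a', hΓ a ha a' ha', fun p hp => mem_iUnion₂.2 ⟨a, ha, mem_iUnion₂.2 ⟨a', ha', hp⟩⟩⟩

theorem exists_isGeodesicFrom_to_vertex_subset {y : X} (hy : y ∈ H) :
    ∃ a ∈ A, ∃ γ, IsGeodesicFrom γ y a ∧ γ '' Icc 0 (dist y a) ⊆ H := by
  obtain ⟨Γ, hΓ, rfl⟩ := hH
  simp only [mem_iUnion] at hy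
  obtain ⟨b, hb, a, ha, s, hs, rfl⟩ := hy
  exact ⟨a, ha, _, (hΓ b hb a ha).suffix hs, ((hΓ b hb a ha).image_suffix_subset hs).trans
    fun p hp => mem_iUnion₂.2 ⟨b, hb, mem_iUnion₂.2 ⟨a, ha, hp⟩⟩⟩

theorem isQuasiconvexSet {δ : ℝ} (hX : DeltaHyperbolic X δ) (hgeo : GeodesicSpace X) :
    IsQuasiconvexSet (8 * δ) H := by
  intro y hy y' hy' γ hγ t ht
  obtain ⟨b, hb, g₁, hg₁, hg₁H⟩ := hH.exists_isGeodesicFrom_to_vertex_subset hy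
  obtain ⟨a, ha, g₃, hg₃, hg₃H⟩ := hH.exists_isGeodesicFrom_to_vertex_subset hy'
  obtain ⟨g₂, hg₂⟩ := hgeo y a
  obtain ⟨g₄, hg₄, hg₄H⟩ := hH.exists_isGeodesicFrom_subset ha hb
  obtain ⟨p, hp, hγp⟩ := hX.exists_mem_union_dist_le hγ hg₂ hg₃ ht
  rcases hp with ⟨u, hu, rfl⟩ | hp
  · obtain ⟨q, hq, hpq⟩ := hX.exists_mem_union_dist_le hg₂ hg₁ hg₄ hu
    calc infDist (γ t) H ≤ dist (γ t) q := infDist_le_dist_of_mem (union_subset hg₁H hg₄H hq)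
      _ ≤ dist (γ t) (g₂ u) + dist (g₂ u) q := dist_triangle _ _ _
      _ ≤ 8 * δ := by linarith
  · have := hX.nonneg y
    calc infDist (γ t) H ≤ dist (γ t) p := infDist_le_dist_of_mem (hg₃H hp)
      _ ≤ 8 * δ := by linarith

end IsGeodesicHull

universe u

/-- Lemma 5.1(2): the nearest-point property of hyperbolic hulls. -/
theorem hyperbolic_hulls_nearest_point :
    ∀ (δ : ℝ), 0 ≤ δ → ∀ N : ℕ, ∃ K C : ℝ, 1 ≤ K ∧ 0 ≤ C ∧
      ∀ (X : Type u) [MetricSpace X], DeltaHyperbolic X δ → GeodesicSpace X →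
        ∀ (A : Finset X), A.Nonempty → A.card ≤ N →
          ∀ H : Set X, IsGeodesicHull (↑A) H →
            ∀ x : X, ∀ y ∈ H, dist x y = Metric.infDist x H →
              ∀ y' ∈ H, dist y y' ≤ K * (dist x y' - dist x y) + C := by
  intro δ hδ N
  refine ⟨1, 20 * δ, le_rfl, by positivity, ?_⟩
  intro X _ hX hgeo A _ _ H hH x y hy hxy y' hy'
  have := (hH.isQuasiconvexSet hX hgeo).dist_le_of_infDist_eq hX hgeo hy hxy hy'
  linarith
end

section
/- For every δ ≥ 0 and every N ∈ ℕ there exist K ≥ 1 and C ≥ 0, depending only on δ and N, such that: if X is a δ-hyperbolic geodesic metric space, A and A' are nonempty finite subsets of X each with at most N elements, and H and H' are geodesic hulls of A and A' respectively, then d_H(H, H') ≤ K · d_H(A, A') + C, where d_H denotes Hausdorff distance. (Lemma 5.1(3) of the paper: the map A ↦ hull(A) is coarsely Lipschitz in the Hausdorff metric.) -/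
universe u

/-!
On a geodesic from `a` to `b`, every point `p` has Gromov product `(a|b)_p = 0`. Moving the
endpoints to nearest points `a'`, `b'` of `A'` raises this product by at most `2 d_H(A, A')`, and
in a `δ`-hyperbolic space a point with `(a'|b')_p ≤ r` lies within `r + 2δ` of any geodesic from
`a'` to `b'`. Hence `d_H(H, H') ≤ 2 d_H(A, A') + 2δ`.
-/

open Metric

variable {X : Type*} [MetricSpace X]

namespace IsGeodesicFrom

variable {γ : ℝ → X} {a b : X} {t : ℝ}

lemma dist_left_s3 (hγ : IsGeodesicFrom γ a b) (ht : t ∈ Set.Icc 0 (dist a b)) :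
    dist (γ t) a = t := by
  obtain ⟨h0, -, hiso⟩ := hγ
  rw [← h0, hiso t ht 0 ⟨le_rfl, dist_nonneg⟩, sub_zero, abs_of_nonneg ht.1]

lemma dist_right_s3 (hγ : IsGeodesicFrom γ a b) (ht : t ∈ Set.Icc 0 (dist a b)) :
    dist (γ t) b = dist a b - t := by
  obtain ⟨-, hd, hiso⟩ := hγ
  have h := hiso t ht _ ⟨dist_nonneg, le_rfl⟩
  rw [hd] at h
  rw [h, abs_sub_comm, abs_of_nonneg (by linarith [ht.2])]

end IsGeodesicFrom

lemma DeltaHyperbolic.exists_dist_geodesic_le {δ : ℝ} (hX : DeltaHyperbolic X δ) {γ : ℝ → X}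
    {a b : X} (hγ : IsGeodesicFrom γ a b) (p : X) :
    ∃ t ∈ Set.Icc 0 (dist a b),
      dist p (γ t) ≤ (dist p a + dist p b - dist a b) / 2 + 2 * δ := by
  -- `γ t` is the point of `[a, b]` at distance `(p|b)_a` from `a`.
  set t := (dist a b + dist p a - dist p b) / 2 with ht_def
  have hpb := dist_triangle p a b
  have hpa := dist_triangle p b a
  have ht : t ∈ Set.Icc 0 (dist a b) := ⟨by linarith, by linarith [dist_comm b a]⟩
  refine ⟨t, ht, ?_⟩
  have hmax : max (dist p a + dist (γ t) b) (dist p b + dist (γ t) a)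
      ≤ (dist p a + dist p b + dist a b) / 2 := by
    rw [hγ.dist_left_s3 ht, hγ.dist_right_s3 ht]
    exact max_le (by linarith) (by linarith)
  linarith [hX p (γ t) a b, dist_comm p (γ t)]

lemma exists_mem_dist_le_hausdorffDist {s t : Set X} {x : X} (hx : x ∈ s) (ht : IsCompact t)
    (htne : t.Nonempty) (hfin : hausdorffEDist s t ≠ ⊤) :
    ∃ y ∈ t, dist x y ≤ hausdorffDist s t := by
  obtain ⟨y, hy, hxy⟩ := ht.exists_infDist_eq_dist htne x
  exact ⟨y, hy, hxy ▸ infDist_le_hausdorffDist_of_mem hx hfin⟩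

namespace IsGeodesicHull

variable {A H : Set X}

lemma exists_geodesic_of_mem (hH : IsGeodesicHull A H) {p : X} (hp : p ∈ H) :
    ∃ a ∈ A, ∃ b ∈ A, ∃ γ : ℝ → X, IsGeodesicFrom γ a b ∧
      ∃ t ∈ Set.Icc 0 (dist a b), γ t = p := by
  obtain ⟨γ, hγ, rfl⟩ := hH
  simp only [Set.mem_iUnion, Set.mem_image] at hp
  obtain ⟨a, ha, b, hb, hp⟩ := hp
  exact ⟨a, ha, b, hb, γ a b, hγ a ha b hb, hp⟩

lemma exists_geodesic_subset (hH : IsGeodesicHull A H) {a b : X} (ha : a ∈ A) (hb : b ∈ A) :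
    ∃ γ : ℝ → X, IsGeodesicFrom γ a b ∧ γ '' Set.Icc 0 (dist a b) ⊆ H := by
  obtain ⟨γ, hγ, rfl⟩ := hH
  refine ⟨γ a b, hγ a ha b hb, ?_⟩
  rintro _ ⟨t, ht, rfl⟩
  exact Set.mem_biUnion ha (Set.mem_biUnion hb ⟨t, ht, rfl⟩)

end IsGeodesicHull

lemma DeltaHyperbolic.infDist_hull_le {δ : ℝ} (hX : DeltaHyperbolic X δ) {A A' H H' : Set X}
    (hA : Bornology.IsBounded A) (hA' : IsCompact A') (hA'ne : A'.Nonempty)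
    (hH : IsGeodesicHull A H) (hH' : IsGeodesicHull A' H') {p : X} (hp : p ∈ H) :
    infDist p H' ≤ 2 * hausdorffDist A A' + 2 * δ := by
  obtain ⟨a, ha, b, hb, γ, hγ, t, ht, rfl⟩ := hH.exists_geodesic_of_mem hp
  have hfin : hausdorffEDist A A' ≠ ⊤ :=
    hausdorffEDist_ne_top_of_nonempty_of_bounded ⟨a, ha⟩ hA'ne hA hA'.isBounded
  obtain ⟨a', ha', haa'⟩ := exists_mem_dist_le_hausdorffDist ha hA' hA'ne hfin
  obtain ⟨b', hb', hbb'⟩ := exists_mem_dist_le_hausdorffDist hb hA' hA'ne hfin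
  obtain ⟨γ', hγ', hγ'H'⟩ := hH'.exists_geodesic_subset ha' hb'
  obtain ⟨s, hs, hps⟩ := hX.exists_dist_geodesic_le hγ' (γ t)
  have hnear : infDist (γ t) H' ≤ dist (γ t) (γ' s) :=
    infDist_le_dist_of_mem (hγ'H' ⟨s, hs, rfl⟩)
  linarith [hγ.dist_left_s3 ht, hγ.dist_right_s3 ht, dist_triangle (γ t) a a',
    dist_triangle (γ t) b b', dist_triangle4 a a' b' b, dist_comm b' b]

/-- Lemma 5.1(3): the hull construction is coarsely Lipschitz in the Hausdorff
metric. -/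
theorem hyperbolic_hulls_coarsely_lipschitz :
    ∀ (δ : ℝ), 0 ≤ δ → ∀ N : ℕ, ∃ K C : ℝ, 1 ≤ K ∧ 0 ≤ C ∧
      ∀ (X : Type u) [MetricSpace X], DeltaHyperbolic X δ → GeodesicSpace X →
        ∀ (A A' : Finset X), A.Nonempty → A.card ≤ N → A'.Nonempty → A'.card ≤ N →
          ∀ H H' : Set X, IsGeodesicHull (↑A) H → IsGeodesicHull (↑A') H' →
            Metric.hausdorffDist H H' ≤ K * Metric.hausdorffDist (A : Set X) (A' : Set X) + C := by
  intro δ hδ N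
  refine ⟨2, 2 * δ, one_le_two, by positivity, ?_⟩
  intro X _ hX _ A A' hA _ hA' _ H H' hH hH'
  have hdist : 0 ≤ hausdorffDist (A : Set X) A' := hausdorffDist_nonneg
  apply hausdorffDist_le_of_infDist (by linarith)
  · exact fun p hp => hX.infDist_hull_le A.finite_toSet.isBounded A'.finite_toSet.isCompact
      (Finset.coe_nonempty.mpr hA') hH hH' hp
  · intro p hp
    rw [hausdorffDist_comm]
    exact hX.infDist_hull_le A'.finite_toSet.isBounded A.finite_toSet.isCompact
      (Finset.coe_nonempty.mpr hA) hH' hH hp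
end

section
/- Let V be a type, G : SimpleGraph V, and n ∈ ℕ. Assume G is (n+2)-clique-free (G.CliqueFree (n+2)), so that the flag complex of G has dimension at most n. Let M be a ℤ/2 n-cycle in the flag complex of G, i.e. a finite set M of finite vertex sets such that every s ∈ M is a clique of G with exactly n+1 vertices, and for every finite vertex set t with exactly n vertices, the number of s ∈ M with t ⊆ s is even. If M is nonempty, then M has at least 2^(n+1) elements. (Lemma 8.2 of the paper: every nontrivial reduced ℤ₂ n-cycle in an n-dimensional flag complex has cardinality at least 2^(n+1).) -/
/-!
Fix a simplex `s₀ ∈ M`. Because `M` is a cycle, every face `s \ {v}` of a simplex `s ∈ M` lies in a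
second simplex `insert w (s \ {v})` of `M`, and since the flag complex has no `(n+1)`-simplex, `w`
is not adjacent to `v`. When `v ∈ s₀`, the new vertex `w` therefore lies outside the clique `s₀`,
so the exchange removes exactly `v` from the trace `s ∩ s₀`. Starting from `s₀` and removing
vertices one at a time, every subset of `s₀` is a trace: `M` shatters `s₀`, whence
`2 ^ (n+1) = 2 ^ #s₀ ≤ #M`.
-/

open Finset

namespace Finset

variable {α : Type*} [DecidableEq α] {𝒜 : Finset (Finset α)} {s : Finset α}

lemma Shatters.two_pow_card_le (h : 𝒜.Shatters s) : 2 ^ #s ≤ #𝒜 := by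
  rw [← card_powerset, ← shatters_iff.1 h]
  exact card_image_le

lemma shatters_of_forall_exists_inter_eq_erase (hs : ∃ u ∈ 𝒜, s ⊆ u)
    (h : ∀ u ∈ 𝒜, ∀ a ∈ s ∩ u, ∃ u' ∈ 𝒜, s ∩ u' = (s ∩ u).erase a) : 𝒜.Shatters s := by
  have key : ∀ A ⊆ s, ∃ u ∈ 𝒜, s ∩ u = s \ A := by
    intro A
    induction A using Finset.induction_on with
    | empty =>
      obtain ⟨u, hu, hsu⟩ := hs
      exact fun _ ↦ ⟨u, hu, by rw [inter_eq_left.2 hsu, sdiff_empty]⟩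
    | @insert a A haA ih =>
      intro hA
      obtain ⟨u, hu, hsu⟩ := ih ((subset_insert a A).trans hA)
      have ha : a ∈ s ∩ u := hsu ▸ mem_sdiff.2 ⟨hA (mem_insert_self a A), haA⟩
      obtain ⟨u', hu', hsu'⟩ := h u hu a ha
      exact ⟨u', hu', by rw [hsu', hsu, sdiff_insert]⟩
  intro t ht
  simpa only [sdiff_sdiff_eq_self ht] using key (s \ t) sdiff_subset

lemma exists_insert_erase_mem {M : Finset (Finset α)} {v : α} (hs : s ∈ M) (hv : v ∈ s)
    (hcard : ∀ u ∈ M, #u = #s) (heven : Even #{u ∈ M | s.erase v ⊆ u}) :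
    ∃ w ∉ s, insert w (s.erase v) ∈ M := by
  have hs' : s ∈ {u ∈ M | s.erase v ⊆ u} := mem_filter.2 ⟨hs, erase_subset v s⟩
  have hone : 1 < #{u ∈ M | s.erase v ⊆ u} := by
    obtain ⟨k, hk⟩ := heven
    have := card_pos.2 ⟨s, hs'⟩
    omega
  obtain ⟨u, hu, hus⟩ := exists_mem_ne hone s
  obtain ⟨huM, hsu⟩ := mem_filter.1 hu
  obtain ⟨w, hw, rfl⟩ := exists_eq_insert_iff.2
    ⟨hsu, by rw [hcard _ huM, card_erase_add_one hv]⟩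
  refine ⟨w, fun hws ↦ ?_, huM⟩
  obtain rfl : w = v := by_contra fun hwv ↦ hw (mem_erase.2 ⟨hwv, hws⟩)
  exact hus (insert_erase hv)

end Finset

namespace SimpleGraph

variable {V : Type*} [DecidableEq V] {G : SimpleGraph V} {k : ℕ} {s : Finset V} {v w : V}

lemma not_adj_of_isClique_insert_erase (hfree : G.CliqueFree (k + 1)) (hs : G.IsNClique k s)
    (hv : v ∈ s) (hw : w ∉ s) (hexch : G.IsClique (insert w (s.erase v) : Finset V)) :
    ¬G.Adj v w := by
  intro hvw
  refine hfree (insert w s) (hs.insert fun b hb ↦ ?_)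
  obtain rfl | hbv := eq_or_ne b v
  · exact hvw.symm
  · exact hexch (by simp) (by simp [hb, hbv]) (ne_of_mem_of_not_mem hb hw).symm

lemma exists_mem_inter_eq_erase {n : ℕ} {M : Finset (Finset V)} (hfree : G.CliqueFree (n + 2))
    (hsimplices : ∀ s ∈ M, G.IsNClique (n + 1) s)
    (hcycle : ∀ t : Finset V, #t = n → Even #{s ∈ M | t ⊆ s})
    {K u : Finset V} (hK : G.IsClique (K : Set V)) (hu : u ∈ M) (hv : v ∈ K ∩ u) :
    ∃ u' ∈ M, K ∩ u' = (K ∩ u).erase v := by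
  obtain ⟨hvK, hvu⟩ := mem_inter.1 hv
  have hcard : ∀ s ∈ M, #s = #u := fun s hs ↦ by
    rw [(hsimplices s hs).card_eq, (hsimplices u hu).card_eq]
  obtain ⟨w, hwu, hwM⟩ := exists_insert_erase_mem hu hvu hcard
    (hcycle _ (by rw [card_erase_of_mem hvu, (hsimplices u hu).card_eq, Nat.add_sub_cancel]))
  have hvw : ¬G.Adj v w := not_adj_of_isClique_insert_erase hfree (hsimplices u hu) hvu hwu
    (hsimplices _ hwM).isClique
  have hwK : w ∉ K := fun hwK ↦ hvw (hK hvK hwK (ne_of_mem_of_not_mem hvu hwu))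
  exact ⟨_, hwM, by rw [inter_insert_of_notMem hwK, inter_erase]⟩

end SimpleGraph

/-- Lemma 8.2: every nontrivial reduced ℤ₂ n-cycle in an n-dimensional flag
complex has cardinality at least 2^(n+1). -/
theorem flag_complex_cycle_lower_bound
    {V : Type*} [DecidableEq V] (G : SimpleGraph V) (n : ℕ)
    (hfree : G.CliqueFree (n + 2))
    (M : Finset (Finset V))
    (hsimplices : ∀ s ∈ M, G.IsNClique (n + 1) s)
    (hcycle : ∀ t : Finset V, t.card = n →
      Even ((M.filter fun s => t ⊆ s).card))
    (hne : M.Nonempty) :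
    2 ^ (n + 1) ≤ M.card := by
  obtain ⟨s₀, hs₀⟩ := hne
  have hshatters : M.Shatters s₀ :=
    shatters_of_forall_exists_inter_eq_erase ⟨s₀, hs₀, subset_rfl⟩ fun _ hu _ hv ↦
      G.exists_mem_inter_eq_erase hfree hsimplices hcycle (hsimplices s₀ hs₀).isClique hu hv
  simpa only [(hsimplices s₀ hs₀).card_eq] using hshatters.two_pow_card_le
end

section
/- Let V be a type, G : SimpleGraph V, and n ≥ 1. Let M be a ℤ/2 n-cycle in the flag complex of G, i.e. a finite set of finite vertex sets such that every s ∈ M is a clique of G with exactly n+1 vertices, and every finite vertex set with exactly n vertices is contained in an even number of members of M. Fix v ∈ V and let M_v = { s \ {v} : s ∈ M and v ∈ s }. Then every member of M_v is a clique of G with exactly n vertices, each adjacent to v, and for every finite vertex set u with exactly n−1 vertices, the number of members of M_v containing u is even; in other words, M_v is a ℤ/2 (n−1)-cycle in the flag complex of the induced graph on the neighbors of v. (Intermediate claim in the proof of Lemma 8.2 of the paper: the link of a vertex in a ℤ₂ cycle is a ℤ₂ cycle of one lower dimension.) -/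
/-!
Erasing `v` is injective on the simplices through `v`, and for `v ∉ u` a simplex `s ∋ v`
satisfies `u ⊆ s.erase v` exactly when `insert v u ⊆ s`. Hence the members of the link
containing the `(n-1)`-set `u` correspond to the members of `M` containing the `n`-set
`insert v u`, an even number; if `v ∈ u` there are none.
-/

open Finset

section VertexLink

variable {V : Type*} [DecidableEq V]

def vertexLink (M : Finset (Finset V)) (v : V) : Finset (Finset V) :=
  (M.filter fun s => v ∈ s).image fun s => s.erase v

variable {M : Finset (Finset V)} {v : V}

lemma mem_vertexLink {t : Finset V} :
    t ∈ vertexLink M v ↔ ∃ s ∈ M, v ∈ s ∧ s.erase v = t := by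
  simp [vertexLink, and_assoc]

lemma filter_subset_vertexLink_of_mem {u : Finset V} (hvu : v ∈ u) :
    (vertexLink M v).filter (fun t => u ⊆ t) = ∅ := by
  refine filter_eq_empty_iff.mpr fun t ht hut => ?_
  obtain ⟨s, -, -, rfl⟩ := mem_vertexLink.mp ht
  exact notMem_erase v s (hut hvu)

lemma card_filter_subset_vertexLink_of_notMem {u : Finset V} (hvu : v ∉ u) :
    ((vertexLink M v).filter fun t => u ⊆ t).card = (M.filter fun s => insert v u ⊆ s).card := by
  have hiff : ∀ s : Finset V, (v ∈ s ∧ u ⊆ s.erase v) ↔ insert v u ⊆ s := fun s => by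
    rw [subset_erase, insert_subset_iff]
    tauto
  rw [vertexLink, filter_image, filter_filter, card_image_of_injOn]
  · exact congrArg card (filter_congr fun s _ => hiff s)
  · exact (erase_injOn' v).mono fun s hs => (mem_filter.mp hs).2.1

lemma SimpleGraph.isNClique_and_adj_of_mem_vertexLink {G : SimpleGraph V} {n : ℕ}
    (hM : ∀ s ∈ M, G.IsNClique (n + 1) s) {t : Finset V} (ht : t ∈ vertexLink M v) :
    G.IsNClique n t ∧ ∀ w ∈ t, G.Adj v w := by
  obtain ⟨s, hs, hvs, rfl⟩ := mem_vertexLink.mp ht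
  refine ⟨(hM s hs).erase_of_mem hvs, fun w hw => ?_⟩
  exact (hM s hs).isClique hvs (mem_of_mem_erase hw) (ne_of_mem_erase hw).symm

end VertexLink

/-- The link of a vertex in a ℤ₂ n-cycle in a flag complex is a ℤ₂ (n-1)-cycle
in the link of the vertex (intermediate claim in Lemma 8.2). -/
theorem link_of_cycle_is_cycle
    {V : Type*} [DecidableEq V] (G : SimpleGraph V) (n : ℕ) (hn : 1 ≤ n)
    (M : Finset (Finset V))
    (hsimplices : ∀ s ∈ M, G.IsNClique (n + 1) s)
    (hcycle : ∀ t : Finset V, t.card = n →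
      Even ((M.filter fun s => t ⊆ s).card))
    (v : V)
    (Mv : Finset (Finset V))
    (hMv : Mv = (M.filter fun s => v ∈ s).image fun s => s.erase v) :
    (∀ t ∈ Mv, G.IsNClique n t ∧ ∀ w ∈ t, G.Adj v w) ∧
    (∀ u : Finset V, u.card = n - 1 →
      Even ((Mv.filter fun t => u ⊆ t).card)) := by
  change Mv = vertexLink M v at hMv
  subst hMv
  refine ⟨fun t ht => G.isNClique_and_adj_of_mem_vertexLink hsimplices ht, fun u hu => ?_⟩
  by_cases hvu : v ∈ u
  · rw [filter_subset_vertexLink_of_mem hvu, card_empty]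
    exact Even.zero
  · rw [card_filter_subset_vertexLink_of_notMem hvu]
    exact hcycle _ (by rw [card_insert_of_notMem hvu, hu]; omega)
end

section
/- Let V be a type and G : SimpleGraph V a tree (G.IsTree). Let A, B ⊆ V be sets such that the induced subgraph of G on A is connected and the induced subgraph of G on B is connected, and suppose A ∩ B is nonempty. Then for every x ∈ A and every y ∈ B there exists z ∈ A ∩ B with G.dist x y = G.dist x z + G.dist z y. (The intersecting case of Lemma 3.6 of the paper ('junctures in tree products') for a single tree: two intersecting subtrees have their common subtree as junctures, with exact distance additivity through the intersection.) -/
/-!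
Three vertices `x, y, w` of a tree have a median `z`, lying on each of the three geodesics between
them: take for `z` the vertex of the `x`–`y` path nearest to `w`; the geodesic from `z` to `w`
meets that path only at `z`, so it extends both halves of the path to paths ending at `w`.
Connected subsets of a tree are geodesically convex, since the path between two of their
vertices is the unique one. Applied to `w ∈ A ∩ B`, the median of `x, y, w` lies on the
`x`–`w` geodesic, hence in `A`, and on the `y`–`w` geodesic, hence in `B`.
-/

namespace SimpleGraph

variable {V : Type*} {G : SimpleGraph V} {u v w z : V}

theorem Walk.dist_add_dist_eq_of_mem_support {p : G.Walk u v} (hp : p.length = G.dist u v)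
    (hz : z ∈ p.support) : G.dist u z + G.dist z v = G.dist u v := by
  classical
  rw [← length_eq_dist_of_subwalk hp (p.isSubwalk_takeUntil hz),
    ← length_eq_dist_of_subwalk hp (p.isSubwalk_dropUntil hz), ← hp, ← length_append,
    take_spec]

theorem Walk.IsPath.append {p : G.Walk u v} {q : G.Walk v w} (hp : p.IsPath) (hq : q.IsPath)
    (hpq : ∀ x ∈ p.support, x ∈ q.support → x = v) : (p.append q).IsPath := by
  have hq' := hq.support_nodup
  rw [← q.cons_tail_support, List.nodup_cons] at hq'
  rw [isPath_def, support_append, List.nodup_append]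
  refine ⟨hp.support_nodup, hq'.2, fun x hxp y hyq hxy => ?_⟩
  subst hxy
  obtain rfl := hpq x hxp (q.cons_tail_support ▸ List.mem_cons_of_mem _ hyq)
  exact hq'.1 hyq

theorem IsAcyclic.length_eq_dist_of_isPath (hG : G.IsAcyclic) {p : G.Walk u v} (hp : p.IsPath) :
    p.length = G.dist u v := by
  obtain ⟨q, hq, hqlen⟩ := p.reachable.exists_path_of_dist
  have hpq : p = q := congrArg Subtype.val ((hG.subsingleton_path u v).elim ⟨p, hp⟩ ⟨q, hq⟩)
  rw [hpq, hqlen]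

theorem IsAcyclic.mem_of_mem_support_of_isPath (hG : G.IsAcyclic) {s : Set V}
    (hs : (G.induce s).Preconnected) (hu : u ∈ s) (hv : v ∈ s) {p : G.Walk u v} (hp : p.IsPath)
    (hz : z ∈ p.support) : z ∈ s := by
  classical
  obtain ⟨q⟩ := hs ⟨u, hu⟩ ⟨v, hv⟩
  let q' := q.map (Embedding.induce s).toHom
  have hpq : p = q'.bypass :=
    congrArg Subtype.val ((hG.subsingleton_path u v).elim ⟨p, hp⟩ ⟨_, q'.bypass_isPath⟩)
  have hz' : z ∈ q'.support := q'.support_bypass_subset_support (hpq ▸ hz)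
  rw [Walk.support_map, List.mem_map] at hz'
  obtain ⟨⟨z, hzs⟩, -, rfl⟩ := hz'
  exact hzs

theorem IsTree.mem_of_dist_add_dist_eq (hG : G.IsTree) {s : Set V}
    (hs : (G.induce s).Preconnected) (hu : u ∈ s) (hv : v ∈ s)
    (hz : G.dist u z + G.dist z v = G.dist u v) : z ∈ s := by
  obtain ⟨p, hp⟩ := hG.connected.exists_walk_length_eq_dist u z
  obtain ⟨q, hq⟩ := hG.connected.exists_walk_length_eq_dist z v
  have hpq : (p.append q).IsPath := Walk.isPath_of_length_eq_dist _ (by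
    rw [Walk.length_append, hp, hq, hz])
  exact hG.isAcyclic.mem_of_mem_support_of_isPath hs hu hv hpq
    ((p.mem_support_append_iff q).mpr (Or.inl p.end_mem_support))

theorem IsAcyclic.dist_add_dist_eq_of_forall_dist_le (hG : G.IsAcyclic) {p : G.Walk u z}
    (hp : p.IsPath) (hzw : G.Reachable z w)
    (hmin : ∀ x ∈ p.support, G.dist z w ≤ G.dist x w) :
    G.dist u z + G.dist z w = G.dist u w := by
  classical
  obtain ⟨g, hg, hglen⟩ := hzw.exists_path_of_dist
  have hmeet : ∀ x ∈ p.support, x ∈ g.support → x = z := by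
    intro x hxp hxg
    have hsplit := g.dist_add_dist_eq_of_mem_support hglen hxg
    have hxz : G.dist z x = 0 := by linarith [hmin x hxp]
    exact ((g.takeUntil x hxg).reachable.dist_eq_zero_iff.mp hxz).symm
  rw [← hG.length_eq_dist_of_isPath (hp.append hg hmeet), Walk.length_append,
    hG.length_eq_dist_of_isPath hp, hglen]

theorem IsTree.exists_median (hG : G.IsTree) (x y w : V) :
    ∃ z, G.dist x z + G.dist z y = G.dist x y ∧ G.dist x z + G.dist z w = G.dist x w ∧
      G.dist y z + G.dist z w = G.dist y w := by
  classical
  obtain ⟨p, hp, hplen⟩ := hG.connected.exists_path_of_dist x y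
  obtain ⟨z, hz, hmin⟩ := Set.exists_min_image {z | z ∈ p.support} (G.dist · w)
    p.support.finite_toSet ⟨x, p.start_mem_support⟩
  refine ⟨z, p.dist_add_dist_eq_of_mem_support hplen hz, ?_, ?_⟩
  · exact hG.isAcyclic.dist_add_dist_eq_of_forall_dist_le (hp.takeUntil hz)
      (hG.connected z w) fun u hu => hmin u (p.support_takeUntil_subset_support hz hu)
  · refine hG.isAcyclic.dist_add_dist_eq_of_forall_dist_le (hp.dropUntil hz).reverse
      (hG.connected z w) fun u hu => hmin u (p.support_dropUntil_subset_support hz ?_)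
    rwa [Walk.support_reverse, List.mem_reverse] at hu

end SimpleGraph

/-- Intersecting case of Lemma 3.6 for a single tree: distances between two
intersecting connected subsets of a tree split through the intersection. -/
theorem intersecting_subtrees_distance_through_intersection
    {V : Type*} (G : SimpleGraph V) (hT : G.IsTree)
    (A B : Set V)
    (hAconn : (G.induce A).Connected) (hBconn : (G.induce B).Connected)
    (hAB : (A ∩ B).Nonempty) :
    ∀ x ∈ A, ∀ y ∈ B, ∃ z ∈ A ∩ B,
      G.dist x y = G.dist x z + G.dist z y := by
  obtain ⟨w, hwA, hwB⟩ := hAB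
  intro x hx y hy
  obtain ⟨z, hxy, hxw, hyw⟩ := hT.exists_median x y w
  exact ⟨z, ⟨hT.mem_of_dist_add_dist_eq hAconn.preconnected hx hwA hxw,
    hT.mem_of_dist_add_dist_eq hBconn.preconnected hy hwB hyw⟩, hxy.symm⟩
end

section
/- For every δ ≥ 0 there exist K ≥ 1 and C ≥ 0, depending only on δ, with the following property. Let X be a δ-hyperbolic geodesic metric space, let γ₁ be a geodesic from a₁ to b₁ with image G₁, and let γ₂ be a geodesic from a₂ to b₂ with image G₂. Then there exist nonempty closed subintervals I₁ ⊆ [0, dist a₁ b₁] and I₂ ⊆ [0, dist a₂ b₂] such that, setting E₁ = γ₁ '' I₁ and E₂ = γ₂ '' I₂, for all x ∈ G₁ and all y ∈ G₂: dist(x, E₁) + d_H(E₁, E₂) + dist(y, E₂) ≤ K · dist x y + C. (The claim in Section 3.1 of the paper that the family of geodesic segments in a δ-hyperbolic space has junctures, with implicit constants depending only on δ.) -/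
universe u

open Set Metric

theorem DeltaHyperbolic.nonneg_s9 {X : Type*} [MetricSpace X] {δ : ℝ} (hX : DeltaHyperbolic X δ)
    (x : X) : 0 ≤ δ := by
  simpa using hX x x x x

theorem IsCompact.exists_dist_le_dist {X : Type*} [PseudoMetricSpace X] {s t : Set X}
    (hs : IsCompact s) (ht : IsCompact t) (hs' : s.Nonempty) (ht' : t.Nonempty) :
    ∃ p ∈ s, ∃ q ∈ t, ∀ x ∈ s, ∀ y ∈ t, dist p q ≤ dist x y := by
  obtain ⟨⟨p, q⟩, ⟨hp, hq⟩, hmin⟩ :=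
    (hs.prod ht).exists_isMinOn (hs'.prod ht') continuous_dist.continuousOn
  exact ⟨p, hp, q, hq, fun x hx y hy => hmin (mk_mem_prod hx hy)⟩

theorem image_Icc_zero_dist_nonempty {X : Type*} [MetricSpace X] (γ : ℝ → X) (a b : X) :
    (γ '' Icc 0 (dist a b)).Nonempty :=
  (nonempty_Icc.2 dist_nonneg).image γ

namespace IsGeodesicFrom

variable {X : Type*} [MetricSpace X] {δ W : ℝ} {γ γ' : ℝ → X} {a b a' b' : X}

theorem dist_eq (h : IsGeodesicFrom γ a b) {s t : ℝ} (hs : s ∈ Icc 0 (dist a b))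
    (ht : t ∈ Icc 0 (dist a b)) : dist (γ s) (γ t) = |s - t| :=
  h.2.2 s hs t ht

theorem dist_eq_sub (h : IsGeodesicFrom γ a b) {s t : ℝ} (hs : s ∈ Icc 0 (dist a b))
    (ht : t ∈ Icc 0 (dist a b)) (hst : s ≤ t) : dist (γ s) (γ t) = t - s := by
  rw [h.dist_eq hs ht, abs_sub_comm, abs_of_nonneg (sub_nonneg.2 hst)]

theorem continuousOn (h : IsGeodesicFrom γ a b) : ContinuousOn γ (Icc 0 (dist a b)) :=
  (LipschitzOnWith.of_dist_le_mul (K := 1) fun s hs t ht => by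
    rw [h.dist_eq hs ht, NNReal.coe_one, one_mul, Real.dist_eq]).continuousOn

theorem isCompact_image (h : IsGeodesicFrom γ a b) : IsCompact (γ '' Icc 0 (dist a b)) :=
  isCompact_Icc.image_of_continuousOn h.continuousOn

theorem exists_infDist_eq_dist (h : IsGeodesicFrom γ a b) (x : X) :
    ∃ y ∈ γ '' Icc 0 (dist a b), infDist x (γ '' Icc 0 (dist a b)) = dist x y :=
  h.isCompact_image.exists_infDist_eq_dist (image_Icc_zero_dist_nonempty γ a b) x

theorem two_mul_infDist_le (hX : DeltaHyperbolic X δ) (h : IsGeodesicFrom γ a b) (w : X)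
    {p q : X} (hp : p ∈ γ '' Icc 0 (dist a b)) (hq : q ∈ γ '' Icc 0 (dist a b)) :
    2 * infDist w (γ '' Icc 0 (dist a b)) ≤ dist w p + dist w q - dist p q + 4 * δ := by
  obtain ⟨s, hs, rfl⟩ := hp
  obtain ⟨t, ht, rfl⟩ := hq
  wlog hst : s ≤ t generalizing s t
  · have := this t ht s hs (le_of_not_ge hst)
    rw [dist_comm (γ t)] at this
    linarith
  have hpq := h.dist_eq_sub hs ht hst
  have hwt := dist_triangle w (γ s) (γ t)
  have hws := dist_triangle_right w (γ s) (γ t)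
  -- the point of `[γ s, γ t]` at which the two sides of the four-point condition balance
  set m := s + (dist w (γ s) + (t - s) - dist w (γ t)) / 2 with hm_def
  have hsm : s ≤ m := by linarith
  have hmt : m ≤ t := by linarith
  have hm : m ∈ Icc 0 (dist a b) := ⟨hs.1.trans hsm, hmt.trans ht.2⟩
  have h4 := hX w (γ m) (γ s) (γ t)
  rw [dist_comm (γ m) (γ s), h.dist_eq_sub hs hm hsm, h.dist_eq_sub hm ht hmt, hpq,
    max_eq_left (by linarith)] at h4
  linarith [infDist_le_dist_of_mem (mem_image_of_mem γ hm) (x := w)]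

theorem infDist_le_of_infDist_eq_dist (hX : DeltaHyperbolic X δ) (h : IsGeodesicFrom γ a b)
    (h' : IsGeodesicFrom γ' a' b') {x y p q : X} (hx : x ∈ γ '' Icc 0 (dist a b))
    (hy : y ∈ γ' '' Icc 0 (dist a' b')) (hxy : infDist x (γ' '' Icc 0 (dist a' b')) = dist x y)
    (hp : p ∈ γ '' Icc 0 (dist a b)) (hq : q ∈ γ' '' Icc 0 (dist a' b')) :
    infDist y (γ '' Icc 0 (dist a b)) ≤ dist p q + 4 * δ := by
  -- with `hxy`, this puts `y` almost on a geodesic from `x` to `q`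
  have hx' := h'.two_mul_infDist_le hX x hy hq
  have hy' := h.two_mul_infDist_le hX y hx hp
  have hyp := dist_triangle y q p
  have hxq := dist_triangle x p q
  rw [dist_comm y x, dist_comm q p] at *
  linarith

theorem infDist_le_of_dist_add_dist_eq (hX : DeltaHyperbolic X δ) (h : IsGeodesicFrom γ a b)
    {p₁ p₂ x : X} (hx : dist p₁ x + dist x p₂ = dist p₁ p₂)
    (h₁ : infDist p₁ (γ '' Icc 0 (dist a b)) ≤ W)
    (h₂ : infDist p₂ (γ '' Icc 0 (dist a b)) ≤ W) :
    infDist x (γ '' Icc 0 (dist a b)) ≤ 2 * W + 2 * δ := by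
  obtain ⟨q₁, hq₁, hd₁⟩ := h.exists_infDist_eq_dist p₁
  obtain ⟨q₂, hq₂, hd₂⟩ := h.exists_infDist_eq_dist p₂
  have hx' := h.two_mul_infDist_le hX x hq₁ hq₂
  have hxq₁ := dist_triangle x p₁ q₁
  have hxq₂ := dist_triangle x p₂ q₂
  have hp₁p₂ := dist_triangle4 p₁ q₁ q₂ p₂
  rw [dist_comm x p₁, dist_comm q₂ p₂] at *
  linarith

end IsGeodesicFrom

section Juncture

variable {X : Type*} [MetricSpace X] {δ W L : ℝ} {S : Set X} {γ γ' : ℝ → X} {a b a' b' : X}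

def nearParams (γ : ℝ → X) (L : ℝ) (S : Set X) (W : ℝ) : Set ℝ :=
  Icc 0 L ∩ (fun σ => infDist (γ σ) S) ⁻¹' Iic W

def juncture (γ : ℝ → X) (L : ℝ) (S : Set X) (W : ℝ) : Set X :=
  γ '' Icc (sInf (nearParams γ L S W)) (sSup (nearParams γ L S W))

theorem nearParams_subset : nearParams γ L S W ⊆ Icc 0 L :=
  inter_subset_left

theorem nearParams_bounds (hT : (nearParams γ L S W).Nonempty) :
    0 ≤ sInf (nearParams γ L S W) ∧
      sInf (nearParams γ L S W) ≤ sSup (nearParams γ L S W) ∧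
      sSup (nearParams γ L S W) ≤ L :=
  ⟨le_csInf hT fun _ hσ => (nearParams_subset hσ).1,
    csInf_le_csSup hT (bddBelow_Icc.mono nearParams_subset) (bddAbove_Icc.mono nearParams_subset),
    csSup_le hT fun _ hσ => (nearParams_subset hσ).2⟩

theorem mem_juncture {σ : ℝ} (hσ : σ ∈ nearParams γ L S W) : γ σ ∈ juncture γ L S W :=
  mem_image_of_mem γ (subset_Icc_csInf_csSup (bddBelow_Icc.mono nearParams_subset)
    (bddAbove_Icc.mono nearParams_subset) hσ)

theorem IsGeodesicFrom.isCompact_nearParams (h : IsGeodesicFrom γ a b) (S : Set X) (W : ℝ) :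
    IsCompact (nearParams γ (dist a b) S W) :=
  isCompact_Icc.of_isClosed_subset
    (((continuous_infDist_pt S).comp_continuousOn h.continuousOn).preimage_isClosed_of_isClosed
      isClosed_Icc isClosed_Iic) nearParams_subset

theorem nearParams_nonempty (hX : DeltaHyperbolic X δ) {p q : X}
    (hp : p ∈ γ '' Icc 0 (dist a b)) (hq : q ∈ γ' '' Icc 0 (dist a' b'))
    (hW : dist p q + 4 * δ ≤ W) :
    (nearParams γ (dist a b) (γ' '' Icc 0 (dist a' b')) W).Nonempty := by
  obtain ⟨σ, hσ, rfl⟩ := hp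
  refine ⟨σ, hσ, (infDist_le_dist_of_mem hq).trans ?_⟩
  linarith [hX.nonneg_s9 q]

theorem IsGeodesicFrom.mem_juncture_of_infDist_eq_dist (hX : DeltaHyperbolic X δ)
    (h : IsGeodesicFrom γ a b) (h' : IsGeodesicFrom γ' a' b') {p q y z : X}
    (hp : p ∈ γ '' Icc 0 (dist a b)) (hq : q ∈ γ' '' Icc 0 (dist a' b'))
    (hW : dist p q + 4 * δ ≤ W) (hy : y ∈ γ' '' Icc 0 (dist a' b'))
    (hz : z ∈ γ '' Icc 0 (dist a b)) (hyz : infDist y (γ '' Icc 0 (dist a b)) = dist y z) :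
    z ∈ juncture γ (dist a b) (γ' '' Icc 0 (dist a' b')) W := by
  obtain ⟨τ, hτ, rfl⟩ := hz
  have hclose := h'.infDist_le_of_infDist_eq_dist hX h hy (mem_image_of_mem γ hτ) hyz hq hp
  rw [dist_comm q p] at hclose
  exact mem_juncture ⟨hτ, hclose.trans hW⟩

theorem IsGeodesicFrom.infDist_juncture_le (hX : DeltaHyperbolic X δ)
    (h : IsGeodesicFrom γ a b) (h' : IsGeodesicFrom γ' a' b') {p q x y : X}
    (hp : p ∈ γ '' Icc 0 (dist a b)) (hq : q ∈ γ' '' Icc 0 (dist a' b'))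
    (hW : dist p q + 4 * δ ≤ W) (hx : x ∈ γ '' Icc 0 (dist a b))
    (hy : y ∈ γ' '' Icc 0 (dist a' b')) :
    infDist x (juncture γ (dist a b) (γ' '' Icc 0 (dist a' b')) W) ≤ 2 * dist x y := by
  obtain ⟨z, hz, hyz⟩ := h.exists_infDist_eq_dist y
  have hzy : dist y z ≤ dist x y := hyz ▸ dist_comm y x ▸ infDist_le_dist_of_mem hx
  calc infDist x (juncture γ (dist a b) (γ' '' Icc 0 (dist a' b')) W)
      ≤ dist x z :=
        infDist_le_dist_of_mem (h.mem_juncture_of_infDist_eq_dist hX h' hp hq hW hy hz hyz)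
    _ ≤ dist x y + dist y z := dist_triangle x y z
    _ ≤ 2 * dist x y := by linarith

theorem IsGeodesicFrom.infDist_le_of_mem_juncture (hX : DeltaHyperbolic X δ)
    (h : IsGeodesicFrom γ a b) (h' : IsGeodesicFrom γ' a' b')
    (hT : (nearParams γ (dist a b) (γ' '' Icc 0 (dist a' b')) W).Nonempty) {z : X}
    (hz : z ∈ juncture γ (dist a b) (γ' '' Icc 0 (dist a' b')) W) :
    infDist z (γ' '' Icc 0 (dist a' b')) ≤ 2 * W + 2 * δ := by
  obtain ⟨σ, hσ, rfl⟩ := hz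
  have hK := h.isCompact_nearParams (γ' '' Icc 0 (dist a' b')) W
  obtain ⟨hs, hsW⟩ := hK.sInf_mem hT
  obtain ⟨ht, htW⟩ := hK.sSup_mem hT
  refine h'.infDist_le_of_dist_add_dist_eq hX ?_ hsW htW
  have hσ' : σ ∈ Icc 0 (dist a b) := ⟨hs.1.trans hσ.1, hσ.2.trans ht.2⟩
  rw [h.dist_eq_sub hs hσ' hσ.1, h.dist_eq_sub hσ' ht hσ.2,
    h.dist_eq_sub hs ht (hσ.1.trans hσ.2)]
  ring

theorem IsGeodesicFrom.infDist_juncture_le_of_mem_juncture (hX : DeltaHyperbolic X δ)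
    (h : IsGeodesicFrom γ a b) (h' : IsGeodesicFrom γ' a' b') {p q z : X}
    (hp : p ∈ γ '' Icc 0 (dist a b)) (hq : q ∈ γ' '' Icc 0 (dist a' b'))
    (hW : dist p q + 4 * δ ≤ W)
    (hz : z ∈ juncture γ (dist a b) (γ' '' Icc 0 (dist a' b')) W) :
    infDist z (juncture γ' (dist a' b') (γ '' Icc 0 (dist a b)) W) ≤ 2 * W + 2 * δ := by
  have hT := nearParams_nonempty hX hp hq hW
  have hzG : z ∈ γ '' Icc 0 (dist a b) :=
    image_mono (Icc_subset_Icc (nearParams_bounds hT).1 (nearParams_bounds hT).2.2) hz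
  obtain ⟨z', hz', hzz'⟩ := h'.exists_infDist_eq_dist z
  calc infDist z (juncture γ' (dist a' b') (γ '' Icc 0 (dist a b)) W)
      ≤ dist z z' := infDist_le_dist_of_mem
        (h'.mem_juncture_of_infDist_eq_dist hX h hq hp (dist_comm p q ▸ hW) hzG hz' hzz')
    _ = infDist z (γ' '' Icc 0 (dist a' b')) := hzz'.symm
    _ ≤ 2 * W + 2 * δ := h.infDist_le_of_mem_juncture hX h' hT hz

theorem IsGeodesicFrom.hausdorffDist_juncture_le (hX : DeltaHyperbolic X δ)
    (h : IsGeodesicFrom γ a b) (h' : IsGeodesicFrom γ' a' b') {p q : X}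
    (hp : p ∈ γ '' Icc 0 (dist a b)) (hq : q ∈ γ' '' Icc 0 (dist a' b'))
    (hW : dist p q + 4 * δ ≤ W) :
    hausdorffDist (juncture γ (dist a b) (γ' '' Icc 0 (dist a' b')) W)
      (juncture γ' (dist a' b') (γ '' Icc 0 (dist a b)) W) ≤ 2 * W + 2 * δ :=
  hausdorffDist_le_of_infDist (by linarith [hX.nonneg_s9 p, dist_nonneg (x := p) (y := q)])
    (fun _ hz => h.infDist_juncture_le_of_mem_juncture hX h' hp hq hW hz)
    (fun _ hz => h'.infDist_juncture_le_of_mem_juncture hX h hq hp (dist_comm p q ▸ hW) hz)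

end Juncture

/-- Geodesic segments in a δ-hyperbolic space have junctures, with constants
depending only on δ. -/
theorem geodesics_have_junctures :
    ∀ (δ : ℝ), 0 ≤ δ → ∃ K C : ℝ, 1 ≤ K ∧ 0 ≤ C ∧
      ∀ (X : Type u) [MetricSpace X], DeltaHyperbolic X δ → GeodesicSpace X →
        ∀ (γ₁ γ₂ : ℝ → X) (a₁ b₁ a₂ b₂ : X),
          IsGeodesicFrom γ₁ a₁ b₁ → IsGeodesicFrom γ₂ a₂ b₂ →
          ∃ s₁ t₁ s₂ t₂ : ℝ,
            0 ≤ s₁ ∧ s₁ ≤ t₁ ∧ t₁ ≤ dist a₁ b₁ ∧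
            0 ≤ s₂ ∧ s₂ ≤ t₂ ∧ t₂ ≤ dist a₂ b₂ ∧
            ∀ x ∈ γ₁ '' Set.Icc 0 (dist a₁ b₁), ∀ y ∈ γ₂ '' Set.Icc 0 (dist a₂ b₂),
              Metric.infDist x (γ₁ '' Set.Icc s₁ t₁) +
                Metric.hausdorffDist (γ₁ '' Set.Icc s₁ t₁) (γ₂ '' Set.Icc s₂ t₂) +
                Metric.infDist y (γ₂ '' Set.Icc s₂ t₂)
              ≤ K * dist x y + C := by
  intro δ hδ
  refine ⟨6, 10 * δ, by norm_num, by positivity, ?_⟩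
  intro X _ hX _ γ₁ γ₂ a₁ b₁ a₂ b₂ h₁ h₂
  obtain ⟨p, hp, q, hq, hpq⟩ := h₁.isCompact_image.exists_dist_le_dist h₂.isCompact_image
    (image_Icc_zero_dist_nonempty γ₁ a₁ b₁) (image_Icc_zero_dist_nonempty γ₂ a₂ b₂)
  set W := dist p q + 4 * δ with hW
  have hW₁ : dist p q + 4 * δ ≤ W := le_rfl
  have hW₂ : dist q p + 4 * δ ≤ W := by rw [dist_comm]
  obtain ⟨hs₁, hst₁, ht₁⟩ := nearParams_bounds (nearParams_nonempty hX hp hq hW₁)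
  obtain ⟨hs₂, hst₂, ht₂⟩ := nearParams_bounds (nearParams_nonempty hX hq hp hW₂)
  refine ⟨_, _, _, _, hs₁, hst₁, ht₁, hs₂, hst₂, ht₂, fun x hx y hy => ?_⟩
  have hxE₁ := h₁.infDist_juncture_le hX h₂ hp hq hW₁ hx hy
  have hyE₂ := h₂.infDist_juncture_le hX h₁ hq hp hW₂ hy hx
  have hE₁E₂ := h₁.hausdorffDist_juncture_le hX h₂ hp hq hW₁
  have hpq_le := hpq x hx y hy
  rw [dist_comm y x] at hyE₂
  unfold juncture at hxE₁ hyE₂ hE₁E₂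
  linarith
end
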